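/- arXiv:1611.07618 — 2 statements merged into one kernel-verified Lean document; each statement's English description precedes it below -/
import Mathlib

section
/- Let T > 0, λ > 0, u₀ ≥ 0, and let L : [0,T] × [0,∞) → [0,∞) be a bounded function such that t ↦ L(t,u) is measurable (locally integrable) on [0,T] for each fixed u ∈ [0,∞) and u ↦ L(t,u) is continuous and non-decreasing on [0,∞) for each fixed t ∈ [0,T]. Then the integral equation u(t) = u₀ + λ ∫₀ᵗ L(s, u(s)) ds has a (continuous) global solution u : [0,T] → [0,∞). -/
/-!
Picard iteration from the constant `u₀` is pointwise non-decreasing in the iteration index,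
because `L` is non-negative and non-decreasing in the state; and every iterate is Lipschitz in
time with the same constant `λ M`, where `M` bounds `L`. So the iterates converge pointwise to a
Lipschitz function, and dominated convergence (the integrands are bounded by `M` and converge by
continuity of `L` in the state) shows that the limit solves the equation. To apply this on
`[0, T] × [0, ∞)` only, `L` is first extended to the plane by clamping both arguments.
-/

open MeasureTheory Set Filter Topology Interval

structure BoundedCaratheodory (G : ℝ → ℝ → ℝ) (M : ℝ) : Prop where
  measurable_left : ∀ v, Measurable fun t => G t v
  continuous_right : ∀ t, Continuous (G t)
  norm_le : ∀ t v, ‖G t v‖ ≤ M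

namespace BoundedCaratheodory

variable {G : ℝ → ℝ → ℝ} {M : ℝ}

theorem nonneg (hG : BoundedCaratheodory G M) : 0 ≤ M :=
  (norm_nonneg _).trans (hG.norm_le 0 0)

theorem measurable_comp (hG : BoundedCaratheodory G M) {f : ℝ → ℝ} (hf : Measurable f) :
    Measurable fun s => G s (f s) :=
  (measurable_uncurry_of_continuous_of_measurable (u := fun v t => G t v)
    (fun t => hG.continuous_right t) hG.measurable_left).comp (hf.prodMk measurable_id)

theorem intervalIntegrable_comp (hG : BoundedCaratheodory G M) {f : ℝ → ℝ} (hf : Measurable f)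
    (a b : ℝ) : IntervalIntegrable (fun s => G s (f s)) volume a b :=
  intervalIntegrable_const.mono_fun' (hG.measurable_comp hf).aestronglyMeasurable
    (ae_of_all _ fun s => hG.norm_le s (f s))

end BoundedCaratheodory

noncomputable def volterraMap (u₀ lam : ℝ) (G : ℝ → ℝ → ℝ) (f : ℝ → ℝ) (t : ℝ) : ℝ :=
  u₀ + lam * ∫ s in (0:ℝ)..t, G s (f s)

section VolterraMap

variable {u₀ lam M : ℝ} {G : ℝ → ℝ → ℝ} {f g : ℝ → ℝ}

@[simp]
theorem volterraMap_zero : volterraMap u₀ lam G f 0 = u₀ := by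
  simp [volterraMap]

theorem continuous_volterraMap (hG : BoundedCaratheodory G M) (hf : Measurable f) :
    Continuous (volterraMap u₀ lam G f) :=
  continuous_const.add <| continuous_const.mul <|
    intervalIntegral.continuous_primitive (hG.intervalIntegrable_comp hf) 0

theorem abs_volterraMap_sub_le (hG : BoundedCaratheodory G M) (hf : Measurable f) (a b : ℝ) :
    |volterraMap u₀ lam G f a - volterraMap u₀ lam G f b| ≤ |lam| * M * |a - b| := by
  have hsub : volterraMap u₀ lam G f a - volterraMap u₀ lam G f b =
      lam * ∫ s in b..a, G s (f s) := by
    rw [volterraMap, volterraMap, ← intervalIntegral.integral_interval_sub_left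
      (hG.intervalIntegrable_comp hf 0 a) (hG.intervalIntegrable_comp hf 0 b)]
    ring
  rw [hsub, abs_mul, mul_assoc, ← Real.norm_eq_abs (∫ s in b..a, G s (f s))]
  gcongr
  exact intervalIntegral.norm_integral_le_of_norm_le_const fun s _ => hG.norm_le s (f s)

theorem le_volterraMap (hlam : 0 ≤ lam) (hnn : ∀ t v, 0 ≤ G t v) {t : ℝ} (ht : 0 ≤ t) :
    u₀ ≤ volterraMap u₀ lam G f t :=
  le_add_of_nonneg_right <|
    mul_nonneg hlam (intervalIntegral.integral_nonneg ht fun s _ => hnn s (f s))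

theorem volterraMap_mono (hG : BoundedCaratheodory G M) (hlam : 0 ≤ lam)
    (hmono : ∀ t, Monotone (G t)) (hf : Measurable f) (hg : Measurable g) {t : ℝ} (ht : 0 ≤ t)
    (hfg : ∀ s ∈ Icc 0 t, f s ≤ g s) : volterraMap u₀ lam G f t ≤ volterraMap u₀ lam G g t := by
  unfold volterraMap
  gcongr
  exact intervalIntegral.integral_mono_on ht (hG.intervalIntegrable_comp hf 0 t)
    (hG.intervalIntegrable_comp hg 0 t) fun s hs => hmono s (hfg s hs)

theorem tendsto_volterraMap (hG : BoundedCaratheodory G M) {f : ℕ → ℝ → ℝ} {g : ℝ → ℝ}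
    (hf : ∀ n, Measurable (f n)) {t : ℝ}
    (hlim : ∀ s ∈ Ι 0 t, Tendsto (fun n => f n s) atTop (𝓝 (g s))) :
    Tendsto (fun n => volterraMap u₀ lam G (f n) t) atTop (𝓝 (volterraMap u₀ lam G g t)) := by
  refine tendsto_const_nhds.add (tendsto_const_nhds.mul ?_)
  refine intervalIntegral.tendsto_integral_filter_of_dominated_convergence (fun _ => M)
    (Eventually.of_forall fun n => (hG.measurable_comp (hf n)).aestronglyMeasurable)
    (Eventually.of_forall fun n => ae_of_all _ fun s _ => hG.norm_le s (f n s))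
    intervalIntegrable_const (ae_of_all _ fun s hs => ?_)
  exact ((hG.continuous_right s).tendsto (g s)).comp (hlim s hs)

end VolterraMap

noncomputable def picardIterate (u₀ lam : ℝ) (G : ℝ → ℝ → ℝ) (n : ℕ) : ℝ → ℝ :=
  (volterraMap u₀ lam G)^[n] fun _ => u₀

noncomputable def picardLimit (u₀ lam : ℝ) (G : ℝ → ℝ → ℝ) (t : ℝ) : ℝ :=
  ⨆ n, picardIterate u₀ lam G n t

section Picard

variable {u₀ lam M : ℝ} {G : ℝ → ℝ → ℝ}

theorem picardIterate_succ (n : ℕ) :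
    picardIterate u₀ lam G (n + 1) = volterraMap u₀ lam G (picardIterate u₀ lam G n) :=
  Function.iterate_succ_apply' _ _ _

@[simp]
theorem picardIterate_apply_zero (n : ℕ) : picardIterate u₀ lam G n 0 = u₀ := by
  cases n with
  | zero => rfl
  | succ n => rw [picardIterate_succ, volterraMap_zero]

theorem continuous_picardIterate (hG : BoundedCaratheodory G M) (n : ℕ) :
    Continuous (picardIterate u₀ lam G n) := by
  induction n with
  | zero => exact continuous_const
  | succ n ih => rw [picardIterate_succ]; exact continuous_volterraMap hG ih.measurable

theorem abs_picardIterate_sub_le (hG : BoundedCaratheodory G M) (n : ℕ) (a b : ℝ) :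
    |picardIterate u₀ lam G n a - picardIterate u₀ lam G n b| ≤ |lam| * M * |a - b| := by
  cases n with
  | zero =>
    simpa [picardIterate] using mul_nonneg (mul_nonneg (abs_nonneg lam) hG.nonneg) (abs_nonneg _)
  | succ n =>
    rw [picardIterate_succ]
    exact abs_volterraMap_sub_le hG (continuous_picardIterate hG n).measurable a b

theorem bddAbove_range_picardIterate (hG : BoundedCaratheodory G M) (t : ℝ) :
    BddAbove (range fun n => picardIterate u₀ lam G n t) := by
  refine ⟨u₀ + |lam| * M * |t|, ?_⟩
  rintro _ ⟨n, rfl⟩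
  have h := abs_picardIterate_sub_le (u₀ := u₀) (lam := lam) hG n t 0
  rw [picardIterate_apply_zero, sub_zero] at h
  linarith [le_abs_self (picardIterate u₀ lam G n t - u₀)]

theorem picardIterate_le_succ (hG : BoundedCaratheodory G M) (hlam : 0 ≤ lam)
    (hnn : ∀ t v, 0 ≤ G t v) (hmono : ∀ t, Monotone (G t)) (n : ℕ) {t : ℝ} (ht : 0 ≤ t) :
    picardIterate u₀ lam G n t ≤ picardIterate u₀ lam G (n + 1) t := by
  induction n generalizing t with
  | zero => rw [picardIterate_succ]; exact le_volterraMap hlam hnn ht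
  | succ n ih =>
    rw [picardIterate_succ, picardIterate_succ (n + 1)]
    exact volterraMap_mono hG hlam hmono (continuous_picardIterate hG n).measurable
      (continuous_picardIterate hG (n + 1)).measurable ht fun s hs => ih hs.1

theorem tendsto_picardIterate (hG : BoundedCaratheodory G M) (hlam : 0 ≤ lam)
    (hnn : ∀ t v, 0 ≤ G t v) (hmono : ∀ t, Monotone (G t)) {t : ℝ} (ht : 0 ≤ t) :
    Tendsto (fun n => picardIterate u₀ lam G n t) atTop (𝓝 (picardLimit u₀ lam G t)) :=
  tendsto_atTop_ciSup
    (monotone_nat_of_le_succ fun n => picardIterate_le_succ hG hlam hnn hmono n ht)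
    (bddAbove_range_picardIterate hG t)

theorem le_picardLimit (hG : BoundedCaratheodory G M) (t : ℝ) : u₀ ≤ picardLimit u₀ lam G t :=
  le_ciSup (bddAbove_range_picardIterate hG t) 0

theorem continuousOn_picardLimit (hG : BoundedCaratheodory G M) (hlam : 0 ≤ lam)
    (hnn : ∀ t v, 0 ≤ G t v) (hmono : ∀ t, Monotone (G t)) :
    ContinuousOn (picardLimit u₀ lam G) (Ici 0) := by
  refine (LipschitzOnWith.of_dist_le_mul (K := Real.toNNReal (|lam| * M))
    fun a ha b hb => ?_).continuousOn
  rw [Real.dist_eq, Real.dist_eq, Real.coe_toNNReal _ (mul_nonneg (abs_nonneg lam) hG.nonneg)]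
  exact le_of_tendsto
    (((tendsto_picardIterate hG hlam hnn hmono ha).sub
      (tendsto_picardIterate hG hlam hnn hmono hb)).abs)
    (Eventually.of_forall fun n => abs_picardIterate_sub_le hG n a b)

theorem picardLimit_eq_volterraMap (hG : BoundedCaratheodory G M) (hlam : 0 ≤ lam)
    (hnn : ∀ t v, 0 ≤ G t v) (hmono : ∀ t, Monotone (G t)) {t : ℝ} (ht : 0 ≤ t) :
    picardLimit u₀ lam G t = volterraMap u₀ lam G (picardLimit u₀ lam G) t := by
  have hlim : ∀ s ∈ Ι 0 t, Tendsto (fun n => picardIterate u₀ lam G n s) atTop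
      (𝓝 (picardLimit u₀ lam G s)) := fun s hs =>
    tendsto_picardIterate hG hlam hnn hmono (uIoc_of_le ht ▸ hs).1.le
  refine tendsto_nhds_unique ((tendsto_picardIterate hG hlam hnn hmono ht).comp
    (tendsto_add_atTop_nat 1)) ?_
  simp only [Function.comp_def, picardIterate_succ]
  exact tendsto_volterraMap hG (fun n => (continuous_picardIterate hG n).measurable) hlim

end Picard

/-- Lemma 3.1: global existence for the scalar Volterra integral equation
`u t = u₀ + λ ∫₀ᵗ L(s, u s) ds` on `[0, T]`. -/
theorem stmt0 (T lam u₀ : ℝ) (hT : 0 < T) (hlam : 0 < lam) (hu₀ : 0 ≤ u₀)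
    (L : ℝ → ℝ → ℝ)
    (hL_nonneg : ∀ t ∈ Icc (0:ℝ) T, ∀ u ∈ Ici (0:ℝ), 0 ≤ L t u)
    (hL_bdd : ∃ M : ℝ, ∀ t ∈ Icc (0:ℝ) T, ∀ u ∈ Ici (0:ℝ), L t u ≤ M)
    (hL_meas : ∀ u ∈ Ici (0:ℝ), Measurable fun t => L t u)
    (hL_cont : ∀ t ∈ Icc (0:ℝ) T, ContinuousOn (fun u => L t u) (Ici 0))
    (hL_mono : ∀ t ∈ Icc (0:ℝ) T, MonotoneOn (fun u => L t u) (Ici 0)) :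
    ∃ u : ℝ → ℝ, ContinuousOn u (Icc 0 T) ∧ (∀ t ∈ Icc (0:ℝ) T, 0 ≤ u t) ∧
      ∀ t ∈ Icc (0:ℝ) T, u t = u₀ + lam * ∫ s in (0:ℝ)..t, L s (u s) := by
  obtain ⟨M, hM⟩ := hL_bdd
  set c := projIcc 0 T hT.le
  set G : ℝ → ℝ → ℝ := fun t v => L (c t) (max v 0)
  have hvmem (v : ℝ) : max v 0 ∈ Ici (0:ℝ) := le_max_right v 0
  have hnn (t v : ℝ) : 0 ≤ G t v := hL_nonneg _ (c t).2 _ (hvmem v)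
  have hmono (t : ℝ) : Monotone (G t) := fun a b hab =>
    hL_mono _ (c t).2 (hvmem a) (hvmem b) (max_le_max hab le_rfl)
  have hG : BoundedCaratheodory G M :=
    { measurable_left := fun v => (hL_meas _ (hvmem v)).comp
        (measurable_subtype_coe.comp continuous_projIcc.measurable)
      continuous_right := fun t => (hL_cont _ (c t).2).comp_continuous
        (continuous_id.max continuous_const) hvmem
      norm_le := fun t v => (abs_of_nonneg (hnn t v)).trans_le (hM _ (c t).2 _ (hvmem v)) }
  set u := picardLimit u₀ lam G
  have hu_nonneg (t : ℝ) : 0 ≤ u t := hu₀.trans (le_picardLimit hG t)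
  refine ⟨u, (continuousOn_picardLimit hG hlam.le hnn hmono).mono Icc_subset_Ici_self,
    fun t _ => hu_nonneg t, fun t ht => ?_⟩
  refine (picardLimit_eq_volterraMap hG hlam.le hnn hmono ht.1).trans ?_
  unfold volterraMap
  congr 2
  refine intervalIntegral.integral_congr fun s hs => ?_
  rw [uIcc_of_le ht.1] at hs
  show L (c s) (max (u s) 0) = L s (u s)
  have hcs : c s = ⟨s, hs.1, hs.2.trans ht.2⟩ := projIcc_of_mem hT.le _
  rw [hcs, max_eq_left (hu_nonneg s)]
end

section
/- Let H be a real Hilbert space, T > 0, α ∈ (1/2, 1), y₀ ∈ H, and let f : [0,T] × H → H be measurable and continuous in the second variable. Suppose there is a bounded function L : [0,T] × [0,∞) → [0,∞), measurable in t for each fixed u, continuous and non-decreasing in u for each fixed t, such that ‖f(t,x)‖² ≤ L(t, ‖x‖²) for all t ∈ [0,T], x ∈ H. Define the Picard iterates y₀(t) = y₀ and y_{n+1}(t) = y₀ + (1/Γ(α)) ∫₀ᵗ (t−s)^{α−1} f(s, y_n(s)) ds. Let x : [0,T] → [0,∞) be a continuous solution of the comparison equation x(t) = C₁ + C₂ ∫₀ᵗ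 L(s, x(s)) ds, where C₁ = 3‖y₀‖² and C₂ = 6 T^{2α−1}/(Γ(α)²(2α−1)). Then for every n ≥ 0 and every t ∈ [0,T], ‖y_n(t)‖² ≤ x(t); in particular sup_{n≥0} sup_{t∈[0,T]} ‖y_n(t)‖² ≤ x(T), so the Picard sequence is uniformly bounded. -/
/-!
Cauchy–Schwarz against the kernel `(t - s) ^ (α - 1)`, which is square integrable on `(0, t)`
precisely because `α > 1/2`, gives
`‖∫₀ᵗ (t - s) ^ (α - 1) • f s (y n s)‖² ≤ t ^ (2α - 1) / (2α - 1) * ∫₀ᵗ ‖f s (y n s)‖²`.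
With `(a + b)² ≤ 2a² + 2b²`, the growth bound `‖f s z‖² ≤ L s (‖z‖²)` and the monotonicity of `L` in
its second variable, the induction hypothesis `‖y n‖² ≤ x` becomes `‖y (n + 1)‖² ≤ x`.
Since `L ≥ 0`, the comparison solution `x` is nondecreasing, whence the uniform bound `x T`.
-/

open MeasureTheory Set

theorem sq_norm_integral_smul_le {α E : Type*} [MeasurableSpace α] {μ : Measure α}
    [NormedAddCommGroup E] [NormedSpace ℝ E] {k : α → ℝ} {g : α → E}
    (hk : MemLp k 2 μ) (hg : MemLp g 2 μ) :
    ‖∫ a, k a • g a ∂μ‖ ^ 2 ≤ (∫ a, k a ^ 2 ∂μ) * ∫ a, ‖g a‖ ^ 2 ∂μ := by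
  have hCS := integral_mul_norm_le_Lp_mul_Lq Real.HolderConjugate.two_two
    (by simpa using hk) (by simpa using hg.norm)
  simp only [Real.rpow_two, Real.norm_eq_abs, sq_abs, abs_norm, ← Real.sqrt_eq_rpow] at hCS
  calc ‖∫ a, k a • g a ∂μ‖ ^ 2 ≤ (∫ a, |k a| * ‖g a‖ ∂μ) ^ 2 := by
        gcongr
        simpa only [norm_smul, Real.norm_eq_abs] using
          norm_integral_le_integral_norm (fun a => k a • g a)
    _ ≤ (√(∫ a, k a ^ 2 ∂μ) * √(∫ a, ‖g a‖ ^ 2 ∂μ)) ^ 2 := by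
        gcongr
    _ = (∫ a, k a ^ 2 ∂μ) * ∫ a, ‖g a‖ ^ 2 ∂μ := by
        rw [mul_pow, Real.sq_sqrt (integral_nonneg fun a => sq_nonneg _),
          Real.sq_sqrt (integral_nonneg fun a => sq_nonneg _)]

theorem MeasureTheory.AEStronglyMeasurable.of_smul_of_ae_ne_zero {α E : Type*} [MeasurableSpace α]
    {μ : Measure α} [NormedAddCommGroup E] [NormedSpace ℝ E] {k : α → ℝ} {g : α → E}
    (hkg : AEStronglyMeasurable (fun a => k a • g a) μ) (hk : AEMeasurable k μ)
    (hk0 : ∀ᵐ a ∂μ, k a ≠ 0) : AEStronglyMeasurable g μ :=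
  (hk.inv.aestronglyMeasurable.smul hkg).congr <| by
    filter_upwards [hk0] with a ha
    simp [smul_smul, inv_mul_cancel₀ ha]

theorem integral_sub_rpow {β : ℝ} (hβ : -1 < β) (t : ℝ) :
    ∫ s in (0 : ℝ)..t, (t - s) ^ β = t ^ (β + 1) / (β + 1) := by
  rw [intervalIntegral.integral_comp_sub_left (fun s => s ^ β), sub_self, sub_zero,
    integral_rpow (Or.inl hβ), Real.zero_rpow (by linarith), sub_zero]

theorem sub_rpow_sq {s t : ℝ} (hst : s ≤ t) (β : ℝ) :
    ((t - s) ^ β) ^ 2 = (t - s) ^ (2 * β) := by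
  rw [← Real.rpow_mul_natCast (sub_nonneg.2 hst), mul_comm]; norm_num

theorem intervalIntegrable_sub_rpow {β : ℝ} (hβ : -1 < β) (t : ℝ) :
    IntervalIntegrable (fun s => (t - s) ^ β) volume 0 t := by
  simpa using
    ((intervalIntegral.intervalIntegrable_rpow' hβ (a := 0) (b := t)).comp_sub_left t).symm

theorem memLp_two_sub_rpow {t α : ℝ} (hα : 1 / 2 < α) :
    MemLp (fun s => (t - s) ^ (α - 1)) 2 (volume.restrict (Ioc 0 t)) := by
  refine (memLp_two_iff_integrable_sq
    ((measurable_const.sub measurable_id).pow_const _).aestronglyMeasurable).2 ?_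
  refine (((intervalIntegrable_sub_rpow (β := 2 * (α - 1)) (by linarith) t).def').mono_set
    Ioc_subset_uIoc).congr_fun (fun s hs => (sub_rpow_sq hs.2 _).symm) measurableSet_Ioc

theorem setIntegral_Ioc_sub_rpow_sq {t α : ℝ} (ht : 0 ≤ t) (hα : 1 / 2 < α) :
    ∫ s in Ioc 0 t, ((t - s) ^ (α - 1)) ^ 2 = t ^ (2 * α - 1) / (2 * α - 1) := by
  rw [setIntegral_congr_fun measurableSet_Ioc (fun s hs => sub_rpow_sq hs.2 (α - 1)),
    ← intervalIntegral.integral_of_le ht, integral_sub_rpow (by linarith)]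
  ring_nf

theorem sq_norm_integral_sub_rpow_smul_le {E : Type*} [NormedAddCommGroup E] [NormedSpace ℝ E]
    {g : ℝ → E} {ψ : ℝ → ℝ} {t α : ℝ} (ht : 0 ≤ t) (hα : 1 / 2 < α)
    (hψ : IntervalIntegrable ψ volume 0 t) (hgψ : ∀ s ∈ Icc 0 t, ‖g s‖ ^ 2 ≤ ψ s) :
    ‖∫ s in (0 : ℝ)..t, (t - s) ^ (α - 1) • g s‖ ^ 2
      ≤ t ^ (2 * α - 1) / (2 * α - 1) * ∫ s in (0 : ℝ)..t, ψ s := by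
  have hC : 0 ≤ t ^ (2 * α - 1) / (2 * α - 1) :=
    div_nonneg (Real.rpow_nonneg ht _) (by linarith)
  have hψ_nonneg : 0 ≤ ∫ s in (0 : ℝ)..t, ψ s :=
    intervalIntegral.integral_nonneg ht fun s hs => (sq_nonneg _).trans (hgψ s hs)
  -- A non-integrable integrand has Bochner integral `0`; an integrable one makes `g` measurable,
  -- since the kernel vanishes only at `s = t`.
  by_cases hint : IntervalIntegrable (fun s => (t - s) ^ (α - 1) • g s) volume 0 t
  swap
  · rw [intervalIntegral.integral_undef hint, norm_zero, sq, zero_mul]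
    positivity
  have hkernel_ne : ∀ᵐ s ∂volume.restrict (Ioc 0 t), (t - s) ^ (α - 1) ≠ 0 := by
    rw [Measure.restrict_congr_set Ioo_ae_eq_Ioc.symm]
    filter_upwards [ae_restrict_mem measurableSet_Ioo] with s hs
    exact (Real.rpow_pos_of_pos (sub_pos.2 hs.2) _).ne'
  have hg_meas : AEStronglyMeasurable g (volume.restrict (Ioc 0 t)) :=
    ((intervalIntegrable_iff_integrableOn_Ioc_of_le ht).1 hint).aestronglyMeasurable
      |>.of_smul_of_ae_ne_zero ((measurable_const.sub measurable_id).pow_const _).aemeasurable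
        hkernel_ne
  have hψ' : IntegrableOn ψ (Ioc 0 t) := (intervalIntegrable_iff_integrableOn_Ioc_of_le ht).1 hψ
  have hg_sq : IntegrableOn (fun s => ‖g s‖ ^ 2) (Ioc 0 t) := by
    refine hψ'.mono' (hg_meas.norm.pow 2) ?_
    filter_upwards [ae_restrict_mem measurableSet_Ioc] with s hs
    rw [Real.norm_of_nonneg (sq_nonneg _)]
    exact hgψ s (Ioc_subset_Icc_self hs)
  have hg : MemLp g 2 (volume.restrict (Ioc 0 t)) :=
    (memLp_two_iff_integrable_sq_norm hg_meas).2 hg_sq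
  calc ‖∫ s in (0 : ℝ)..t, (t - s) ^ (α - 1) • g s‖ ^ 2
      = ‖∫ s in Ioc 0 t, (t - s) ^ (α - 1) • g s‖ ^ 2 := by rw [intervalIntegral.integral_of_le ht]
    _ ≤ (∫ s in Ioc 0 t, ((t - s) ^ (α - 1)) ^ 2) * ∫ s in Ioc 0 t, ‖g s‖ ^ 2 :=
        sq_norm_integral_smul_le (memLp_two_sub_rpow hα) hg
    _ ≤ t ^ (2 * α - 1) / (2 * α - 1) * ∫ s in (0 : ℝ)..t, ψ s := by
        rw [setIntegral_Ioc_sub_rpow_sq ht hα, intervalIntegral.integral_of_le ht]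
        exact mul_le_mul_of_nonneg_left (setIntegral_mono_on hg_sq hψ' measurableSet_Ioc
          fun s hs => hgψ s (Ioc_subset_Icc_self hs)) hC

theorem integrableOn_Icc_of_caratheodory {L : ℝ → ℝ → ℝ} {x : ℝ → ℝ} {a b M : ℝ} (hab : a ≤ b)
    (hL_meas : ∀ u ∈ Ici (0 : ℝ), Measurable fun t => L t u)
    (hL_cont : ∀ t ∈ Icc a b, ContinuousOn (L t) (Ici 0))
    (hL_bdd : ∀ t ∈ Icc a b, ∀ u ∈ Ici (0 : ℝ), ‖L t u‖ ≤ M)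
    (hx : ContinuousOn x (Icc a b)) (hx_nonneg : ∀ t ∈ Icc a b, 0 ≤ x t) :
    IntegrableOn (fun t => L t (x t)) (Icc a b) := by
  -- Extend `L` and `x` off `[a, b] × [0, ∞)` to apply
  -- `measurable_uncurry_of_continuous_of_measurable` (Carathéodory functions are measurable).
  set L' : ℝ → ℝ → ℝ := fun u t => if t ∈ Icc a b then L t (max u 0) else 0
  set x' : ℝ → ℝ := IccExtend hab ((Icc a b).domRestrict x)
  have hL'_cont : ∀ t, Continuous fun u => L' u t := by
    intro t
    by_cases ht : t ∈ Icc a b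
    · simp only [L', if_pos ht]
      exact (hL_cont t ht).comp_continuous (continuous_id.max continuous_const)
        fun u => le_max_right u 0
    · simp only [L', if_neg ht]
      exact continuous_const
  have hL'_meas : ∀ u, Measurable (L' u) := fun u =>
    Measurable.ite measurableSet_Icc (hL_meas _ (le_max_right u 0)) measurable_const
  have hx'_cont : Continuous x' := continuous_IccExtend_iff.2 hx.domRestrict
  have heq : EqOn (fun t => L' (x' t) t) (fun t => L t (x t)) (Icc a b) := fun t ht => by
    simp only [L', x', if_pos ht, IccExtend_of_mem _ _ ht, domRestrict_apply,
      max_eq_left (hx_nonneg t ht)]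
  refine IntegrableOn.congr_fun ?_ heq measurableSet_Icc
  refine Measure.integrableOn_of_bounded measure_Icc_lt_top.ne
    ((measurable_uncurry_of_continuous_of_measurable hL'_cont hL'_meas).comp
      (hx'_cont.measurable.prodMk measurable_id)).aestronglyMeasurable (M := M) ?_
  filter_upwards [ae_restrict_mem measurableSet_Icc] with t ht
  rw [show L' (x' t) t = L t (x t) from heq ht]
  exact hL_bdd t ht _ (hx_nonneg t ht)

theorem sq_norm_add_smul_integral_sub_rpow_smul_le {E : Type*} [NormedAddCommGroup E]
    [NormedSpace ℝ E] {g : ℝ → E} {ψ : ℝ → ℝ} {t T α : ℝ} (y₀ : E) (ht : 0 ≤ t) (htT : t ≤ T)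
    (hα : 1 / 2 < α) (hψ : IntervalIntegrable ψ volume 0 t)
    (hgψ : ∀ s ∈ Icc 0 t, ‖g s‖ ^ 2 ≤ ψ s) :
    ‖y₀ + (1 / Real.Gamma α) • ∫ s in (0 : ℝ)..t, (t - s) ^ (α - 1) • g s‖ ^ 2
      ≤ 3 * ‖y₀‖ ^ 2 + 6 * T ^ (2 * α - 1) / (Real.Gamma α ^ 2 * (2 * α - 1))
          * ∫ s in (0 : ℝ)..t, ψ s := by
  set I := ∫ s in (0 : ℝ)..t, (t - s) ^ (α - 1) • g s
  set J := ∫ s in (0 : ℝ)..t, ψ s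
  have hT : 0 ≤ T := ht.trans htT
  have hΓ : 0 < Real.Gamma α := Real.Gamma_pos_of_pos (by linarith)
  have hD : 0 < 2 * α - 1 := by linarith
  have hJ : 0 ≤ J := intervalIntegral.integral_nonneg ht fun s hs => (sq_nonneg _).trans (hgψ s hs)
  have hI : ‖I‖ ^ 2 ≤ T ^ (2 * α - 1) / (2 * α - 1) * J := by
    refine (sq_norm_integral_sub_rpow_smul_le ht hα hψ hgψ).trans ?_
    gcongr
  have hK : 0 ≤ T ^ (2 * α - 1) / (2 * α - 1) * J / Real.Gamma α ^ 2 := by positivity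
  calc ‖y₀ + (1 / Real.Gamma α) • I‖ ^ 2 ≤ (‖y₀‖ + 1 / Real.Gamma α * ‖I‖) ^ 2 := by
        gcongr
        refine (norm_add_le _ _).trans_eq ?_
        rw [norm_smul, Real.norm_of_nonneg (by positivity)]
    _ ≤ 2 * (‖y₀‖ ^ 2 + ‖I‖ ^ 2 / Real.Gamma α ^ 2) := by
        refine add_sq_le.trans_eq ?_
        ring
    _ ≤ 2 * (‖y₀‖ ^ 2 + T ^ (2 * α - 1) / (2 * α - 1) * J / Real.Gamma α ^ 2) := by
        gcongr
    _ ≤ 3 * ‖y₀‖ ^ 2 + 6 * T ^ (2 * α - 1) / (Real.Gamma α ^ 2 * (2 * α - 1)) * J := by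
        rw [show 6 * T ^ (2 * α - 1) / (Real.Gamma α ^ 2 * (2 * α - 1)) * J
            = 6 * (T ^ (2 * α - 1) / (2 * α - 1) * J / Real.Gamma α ^ 2) by field_simp]
        linarith [sq_nonneg ‖y₀‖]

theorem monotoneOn_of_eq_add_mul_integral {x ψ : ℝ → ℝ} {a b c C : ℝ} (hC : 0 ≤ C)
    (hψ : IntegrableOn ψ (Icc a b)) (hψ_nonneg : ∀ t ∈ Icc a b, 0 ≤ ψ t)
    (hx : ∀ t ∈ Icc a b, x t = c + C * ∫ s in a..t, ψ s) : MonotoneOn x (Icc a b) := by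
  intro s hs t ht hst
  rw [hx s hs, hx t ht]
  gcongr
  exact intervalIntegral.integral_mono_interval le_rfl hs.1 hst
    (ae_restrict_of_forall_mem measurableSet_Ioc fun u hu => hψ_nonneg u ⟨hu.1.le, hu.2.trans ht.2⟩)
    (hψ.mono_set (uIcc_subset_Icc (left_mem_Icc.2 (hs.1.trans hs.2)) ht)).intervalIntegrable

theorem stmt3_general {H : Type*} [NormedAddCommGroup H] [InnerProductSpace ℝ H]
    (T α : ℝ) (hT : 0 < T) (hα : α ∈ Ioo (1 / 2 : ℝ) 1)
    (y₀ : H) (f : ℝ → H → H)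
    (L : ℝ → ℝ → ℝ)
    (hL_nonneg : ∀ t ∈ Icc (0:ℝ) T, ∀ u ∈ Ici (0:ℝ), 0 ≤ L t u)
    (hL_bdd : ∃ M : ℝ, ∀ t ∈ Icc (0:ℝ) T, ∀ u ∈ Ici (0:ℝ), L t u ≤ M)
    (hL_meas : ∀ u ∈ Ici (0:ℝ), Measurable fun t => L t u)
    (hL_cont : ∀ t ∈ Icc (0:ℝ) T, ContinuousOn (fun u => L t u) (Ici 0))
    (hL_mono : ∀ t ∈ Icc (0:ℝ) T, MonotoneOn (fun u => L t u) (Ici 0))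
    (hfL : ∀ t ∈ Icc (0:ℝ) T, ∀ x : H, ‖f t x‖ ^ 2 ≤ L t (‖x‖ ^ 2))
    (y : ℕ → ℝ → H)
    (hy0 : ∀ t : ℝ, y 0 t = y₀)
    (hy : ∀ n : ℕ, ∀ t ∈ Icc (0:ℝ) T,
      y (n + 1) t
        = y₀ + (1 / Real.Gamma α) • ∫ s in (0:ℝ)..t, (t - s) ^ (α - 1) • f s (y n s))
    (x : ℝ → ℝ)
    (hx_cont : ContinuousOn x (Icc 0 T))
    (hx_nonneg : ∀ t ∈ Icc (0:ℝ) T, 0 ≤ x t)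
    (hx : ∀ t ∈ Icc (0:ℝ) T,
      x t = 3 * ‖y₀‖ ^ 2
        + 6 * T ^ (2 * α - 1) / (Real.Gamma α ^ 2 * (2 * α - 1))
            * ∫ s in (0:ℝ)..t, L s (x s)) :
    (∀ n : ℕ, ∀ t ∈ Icc (0:ℝ) T, ‖y n t‖ ^ 2 ≤ x t) ∧
      ∀ n : ℕ, ∀ t ∈ Icc (0:ℝ) T, ‖y n t‖ ^ 2 ≤ x T := by
  obtain ⟨M, hM⟩ := hL_bdd
  have hLx_nonneg : ∀ t ∈ Icc 0 T, 0 ≤ L t (x t) := fun t ht => hL_nonneg t ht _ (hx_nonneg t ht)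
  have hLx : IntegrableOn (fun s => L s (x s)) (Icc 0 T) :=
    integrableOn_Icc_of_caratheodory hT.le hL_meas hL_cont
      (fun t ht u hu => (Real.norm_of_nonneg (hL_nonneg t ht u hu)).trans_le (hM t ht u hu))
      hx_cont hx_nonneg
  have hC : 0 ≤ 6 * T ^ (2 * α - 1) / (Real.Gamma α ^ 2 * (2 * α - 1)) := by
    have : 0 < 2 * α - 1 := by linarith [hα.1]
    positivity
  have hx_mono := monotoneOn_of_eq_add_mul_integral hC hLx hLx_nonneg hx
  have h0 : (0 : ℝ) ∈ Icc 0 T := left_mem_Icc.2 hT.le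
  have hbound : ∀ n, ∀ t ∈ Icc (0:ℝ) T, ‖y n t‖ ^ 2 ≤ x t := by
    intro n
    induction n with
    | zero =>
      intro t ht
      rw [hy0]
      calc ‖y₀‖ ^ 2 ≤ 3 * ‖y₀‖ ^ 2 := by linarith [sq_nonneg ‖y₀‖]
        _ = x 0 := by simp [hx 0 h0]
        _ ≤ x t := hx_mono h0 ht ht.1
    | succ n ih =>
      intro t ht
      rw [hy n t ht, hx t ht]
      refine sq_norm_add_smul_integral_sub_rpow_smul_le y₀ ht.1 ht.2 hα.1
        (hLx.mono_set (uIcc_subset_Icc h0 ht)).intervalIntegrable fun s hs => ?_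
      have hs' : s ∈ Icc 0 T := ⟨hs.1, hs.2.trans ht.2⟩
      exact (hfL s hs' _).trans
        (hL_mono s hs' (mem_Ici.2 (sq_nonneg _)) (hx_nonneg s hs') (ih s hs'))
  exact ⟨hbound, fun n t ht => (hbound n t ht).trans (hx_mono ht (right_mem_Icc.2 hT.le) ht.2)⟩

/-- Lemma 3.3 (deterministic part): the Picard iterates for the fractional Volterra
integral equation of order `α ∈ (1/2, 1)` are dominated by the solution `x` of the
scalar comparison equation `x t = 3‖y₀‖² + (6 T^(2α-1)/(Γ(α)² (2α-1))) ∫₀ᵗ L(s, x s) ds`;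
in particular the Picard sequence is uniformly bounded by `x T`. -/
theorem stmt3 {H : Type*} [NormedAddCommGroup H] [InnerProductSpace ℝ H] [CompleteSpace H]
    [MeasurableSpace H] [BorelSpace H]
    (T α : ℝ) (hT : 0 < T) (hα : α ∈ Ioo (1 / 2 : ℝ) 1)
    (y₀ : H) (f : ℝ → H → H)
    (hf_meas : Measurable (Function.uncurry f))
    (hf_cont : ∀ t ∈ Icc (0:ℝ) T, Continuous (f t))
    (L : ℝ → ℝ → ℝ)
    (hL_nonneg : ∀ t ∈ Icc (0:ℝ) T, ∀ u ∈ Ici (0:ℝ), 0 ≤ L t u)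
    (hL_bdd : ∃ M : ℝ, ∀ t ∈ Icc (0:ℝ) T, ∀ u ∈ Ici (0:ℝ), L t u ≤ M)
    (hL_meas : ∀ u ∈ Ici (0:ℝ), Measurable fun t => L t u)
    (hL_cont : ∀ t ∈ Icc (0:ℝ) T, ContinuousOn (fun u => L t u) (Ici 0))
    (hL_mono : ∀ t ∈ Icc (0:ℝ) T, MonotoneOn (fun u => L t u) (Ici 0))
    (hfL : ∀ t ∈ Icc (0:ℝ) T, ∀ x : H, ‖f t x‖ ^ 2 ≤ L t (‖x‖ ^ 2))
    (y : ℕ → ℝ → H)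
    (hy0 : ∀ t : ℝ, y 0 t = y₀)
    (hy : ∀ n : ℕ, ∀ t ∈ Icc (0:ℝ) T,
      y (n + 1) t
        = y₀ + (1 / Real.Gamma α) • ∫ s in (0:ℝ)..t, (t - s) ^ (α - 1) • f s (y n s))
    (x : ℝ → ℝ)
    (hx_cont : ContinuousOn x (Icc 0 T))
    (hx_nonneg : ∀ t ∈ Icc (0:ℝ) T, 0 ≤ x t)
    (hx : ∀ t ∈ Icc (0:ℝ) T,
      x t = 3 * ‖y₀‖ ^ 2
        + 6 * T ^ (2 * α - 1) / (Real.Gamma α ^ 2 * (2 * α - 1))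
            * ∫ s in (0:ℝ)..t, L s (x s)) :
    (∀ n : ℕ, ∀ t ∈ Icc (0:ℝ) T, ‖y n t‖ ^ 2 ≤ x t) ∧
      ∀ n : ℕ, ∀ t ∈ Icc (0:ℝ) T, ‖y n t‖ ^ 2 ≤ x T :=
  stmt3_general T α hT hα y₀ f L hL_nonneg hL_bdd hL_meas hL_cont hL_mono hfL y hy0 hy x hx_cont
    hx_nonneg hx
end
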